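/- arXiv:1411.3856 — 4 statements merged into one kernel-verified Lean document; each statement's English description precedes it below -/
import Mathlib

section
/- Let X and Z be independent nonnegative real-valued random variables on a probability space, with cumulative distribution functions F_X and F_Z. Then the average secrecy rate satisfies E[ (log₂(1+X) − log₂(1+Z))⁺ ] = (1/ln 2) ∫₀^∞ F_Z(z) · (1 − F_X(z)) / (1+z) dz, where both sides are understood as values in [0, ∞] (the integrand is nonnegative, so no integrability hypothesis is needed). -/
open MeasureTheory ProbabilityTheory Real Set


lemma cont_on_inv (s : Set ℝ) (hs : ∀ y ∈ s, (1:ℝ) + y ≠ 0) :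
    ContinuousOn (fun z : ℝ => 1 / (1 + z)) s :=
  continuousOn_const.div (continuous_const.add continuous_id).continuousOn hs

lemma layer_cake_log (a b : ℝ) (ha : 0 ≤ a) (hb : 0 ≤ b) :
    ENNReal.ofReal (max (Real.log (1 + a) - Real.log (1 + b)) 0)
      = ∫⁻ z in Ioi (0 : ℝ),
          Set.indicator (Set.Ico b a) (fun z => ENNReal.ofReal (1 / (1 + z))) z := by
  rcases le_or_gt a b with h | h
  · rw [Ico_eq_empty (not_lt.2 h), indicator_empty]
    simp [max_eq_right (sub_nonpos.2 (Real.log_le_log (by linarith : (0:ℝ) < 1 + a)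
      (by linarith : (1:ℝ) + a ≤ 1 + b)))]
  · rw [lintegral_indicator measurableSet_Ico, Measure.restrict_restrict measurableSet_Ico]
    have hae : (Ico b a ∩ Ioi 0 : Set ℝ) =ᵐ[volume] Ioc b a := by
      have h1 : (Ico b a ∩ Ioi 0 : Set ℝ) =ᵐ[volume] Ico b a := by
        refine (ae_eq_set.2 ⟨?_, ?_⟩)
        · simp [diff_eq_empty.2 inter_subset_left]
        · refine measure_mono_null (fun z hz => ?_) (Real.volume_singleton (a := (0:ℝ)))
          rcases hz with ⟨hz1, hz2⟩
          have hz2' : z ≤ 0 := not_lt.1 fun hzi => hz2 ⟨hz1, hzi⟩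
          have : z = 0 := le_antisymm hz2' (hb.trans hz1.1)
          simp [this]
      exact h1.trans Ico_ae_eq_Ioc
    rw [Measure.restrict_congr_set hae]
    have hne : ∀ y ∈ Icc b a, (1:ℝ) + y ≠ 0 := fun y hy hc => by
      rcases hy with ⟨h1, h2⟩; linarith
    have hint : IntegrableOn (fun z => 1 / (1 + z)) (Ioc b a) volume :=
      (ContinuousOn.integrableOn_compact isCompact_Icc (cont_on_inv _ hne)).mono_set
        Ioc_subset_Icc_self
    rw [← ofReal_integral_eq_lintegral_ofReal hint
      ((ae_restrict_mem measurableSet_Ioc).mono fun z hz => by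
        have : (0:ℝ) < 1 + z := by rcases hz with ⟨h1, h2⟩; linarith
        positivity)]
    congr 1
    rw [← intervalIntegral.integral_of_le h.le]
    have hii : IntervalIntegrable (fun z : ℝ => 1 / (1 + z)) volume b a := by
      rw [intervalIntegrable_iff_integrableOn_Ioc_of_le h.le]; exact hint
    have : ∫ z in b..a, 1 / (1 + z) = Real.log (1 + a) - Real.log (1 + b) := by
      rw [intervalIntegral.integral_eq_sub_of_hasDerivAt
        (f := fun z => Real.log (1 + z)) ?_ hii]
      intro z hz
      rw [uIcc_of_le h.le] at hz
      have h1z : (1 : ℝ) + z ≠ 0 := hne z hz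
      have := ((hasDerivAt_id z).const_add 1).log h1z
      simpa using this
    rw [this, max_eq_left]
    exact sub_nonneg.2 (Real.log_le_log (by linarith : (0:ℝ) < 1 + b) (by linarith))

/-- **Average secrecy rate as a single integral against the two CDFs.**
If `X` and `Z` are independent nonnegative random variables, then
`E[(log₂(1+X) − log₂(1+Z))⁺] = (1/ln 2) ∫₀^∞ F_Z(z)(1 − F_X(z))/(1+z) dz`,
both sides being values in `[0,∞]`. -/
theorem avg_secrecy_rate_integral
    {Ω : Type*} [MeasurableSpace Ω] (P : Measure Ω) [IsProbabilityMeasure P]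
    (X Z : Ω → ℝ) (hX : Measurable X) (hZ : Measurable Z)
    (hXpos : ∀ ω, 0 ≤ X ω) (hZpos : ∀ ω, 0 ≤ Z ω)
    (hindep : IndepFun X Z P) :
    ∫⁻ ω, ENNReal.ofReal (max (Real.logb 2 (1 + X ω) - Real.logb 2 (1 + Z ω)) 0) ∂P
      = ENNReal.ofReal (1 / Real.log 2) *
        ∫⁻ z in Ioi (0 : ℝ),
          ENNReal.ofReal ((P {ω | Z ω ≤ z}).toReal * (1 - (P {ω | X ω ≤ z}).toReal) / (1 + z)) := by
  have hlog2 : (0:ℝ) < Real.log 2 := Real.log_pos one_lt_two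
  have hpt : ∀ ω, ENNReal.ofReal (max (Real.logb 2 (1 + X ω) - Real.logb 2 (1 + Z ω)) 0)
      = ENNReal.ofReal (1 / Real.log 2) *
        ENNReal.ofReal (max (Real.log (1 + X ω) - Real.log (1 + Z ω)) 0) := by
    intro ω
    rw [← ENNReal.ofReal_mul (by positivity)]
    congr 1
    rw [Real.logb, Real.logb, div_sub_div_same]
    calc max ((Real.log (1 + X ω) - Real.log (1 + Z ω)) / Real.log 2) 0
        = max ((Real.log (1 + X ω) - Real.log (1 + Z ω)) / Real.log 2) (0 / Real.log 2) := by
          rw [zero_div]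
      _ = max (Real.log (1 + X ω) - Real.log (1 + Z ω)) 0 / Real.log 2 :=
          max_div_div_right hlog2.le _ _
      _ = 1 / Real.log 2 * max (Real.log (1 + X ω) - Real.log (1 + Z ω)) 0 := by
          rw [one_div, inv_mul_eq_div]
  simp_rw [hpt]
  have hmeas : Measurable fun ω => ENNReal.ofReal
      (max (Real.log (1 + X ω) - Real.log (1 + Z ω)) 0) :=
    ENNReal.measurable_ofReal.comp
      (((Real.measurable_log.comp (measurable_const.add hX)).sub
        (Real.measurable_log.comp (measurable_const.add hZ))).max measurable_const)
  rw [lintegral_const_mul _ hmeas]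
  congr 1
  have hlc : ∀ ω, ENNReal.ofReal (max (Real.log (1 + X ω) - Real.log (1 + Z ω)) 0)
      = ∫⁻ z in Ioi (0:ℝ), Set.indicator (Ico (Z ω) (X ω))
          (fun z => ENNReal.ofReal (1 / (1 + z))) z :=
    fun ω => layer_cake_log _ _ (hXpos ω) (hZpos ω)
  rw [lintegral_congr hlc]
  have hprod : ∀ (ω : Ω) (z : ℝ), Set.indicator (Ico (Z ω) (X ω))
        (fun z => ENNReal.ofReal (1 / (1 + z))) z
      = Set.indicator {p : Ω × ℝ | Z p.1 ≤ p.2 ∧ p.2 < X p.1}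
        (fun p => ENNReal.ofReal (1 / (1 + p.2))) (ω, z) := by
    intro ω z
    simp only [Set.indicator_apply, mem_Ico, mem_setOf_eq]
  simp_rw [hprod]
  rw [lintegral_lintegral_swap]
  · refine setLIntegral_congr_fun measurableSet_Ioi ?_
    intro z hz
    have hz0 : (0:ℝ) < 1 + z := by have := hz.out; linarith
    have hind2 : ∀ ω, Set.indicator {p : Ω × ℝ | Z p.1 ≤ p.2 ∧ p.2 < X p.1}
          (fun p => ENNReal.ofReal (1 / (1 + p.2))) (ω, z)
        = Set.indicator (Z ⁻¹' Iic z ∩ X ⁻¹' Ioi z)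
          (fun _ => ENNReal.ofReal (1 / (1 + z))) ω := by
      intro ω
      classical
      rw [Set.indicator_apply, Set.indicator_apply]
      exact if_congr (by simp [mem_inter_iff]) rfl rfl
    simp_rw [hind2]
    rw [lintegral_indicator_const
      (((hZ measurableSet_Iic).inter (hX measurableSet_Ioi)))]
    have hip : P (Z ⁻¹' Iic z ∩ X ⁻¹' Ioi z) = P (Z ⁻¹' Iic z) * P (X ⁻¹' Ioi z) := by
      rw [inter_comm, hindep.measure_inter_preimage_eq_mul _ _ measurableSet_Ioi measurableSet_Iic,
        mul_comm]
    have hXc : P (X ⁻¹' Ioi z) = 1 - P (X ⁻¹' Iic z) := by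
      rw [show X ⁻¹' Ioi z = (X ⁻¹' Iic z)ᶜ by rw [← preimage_compl, compl_Iic]]
      exact prob_compl_eq_one_sub (hX measurableSet_Iic)
    rw [hip, hXc]
    have hA : P (Z ⁻¹' Iic z) = P {ω | Z ω ≤ z} := rfl
    have hB : P (X ⁻¹' Iic z) = P {ω | X ω ≤ z} := rfl
    rw [hA, hB]
    have hfin : ∀ s : Set Ω, P s ≠ ⊤ := fun s => measure_ne_top P s
    have htB : (P {ω | X ω ≤ z}).toReal ≤ 1 := by
      simpa using ENNReal.toReal_mono ENNReal.one_ne_top prob_le_one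
    have h2 : ENNReal.ofReal (1 - (P {ω | X ω ≤ z}).toReal) = 1 - P {ω | X ω ≤ z} := by
      rw [ENNReal.ofReal_sub _ ENNReal.toReal_nonneg, ENNReal.ofReal_one,
        ENNReal.ofReal_toReal (hfin _)]
    have h1 : ENNReal.ofReal
          ((P {ω | Z ω ≤ z}).toReal * (1 - (P {ω | X ω ≤ z}).toReal) / (1 + z))
        = P {ω | Z ω ≤ z} * (1 - P {ω | X ω ≤ z}) * ENNReal.ofReal (1 / (1 + z)) := by
      rw [div_eq_mul_one_div, mul_assoc, ENNReal.ofReal_mul ENNReal.toReal_nonneg,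
        ENNReal.ofReal_mul (by linarith), ENNReal.ofReal_toReal (hfin _), h2, mul_assoc]
    rw [h1, mul_comm]
  · refine (Measurable.indicator ?_ ?_).aemeasurable
    · exact ENNReal.measurable_ofReal.comp
        (measurable_const.div (measurable_const.add measurable_snd))
    · exact (measurableSet_le (hZ.comp measurable_fst) measurable_snd).inter
        (measurableSet_lt measurable_snd (hX.comp measurable_fst))
end

section
/- Let Γ_R = exp(G_R), Γ_B = exp(G_B), Γ_E = exp(G_E), where G_R, G_B, G_E are mutually independent real Gaussian random variables with means μ_R, μ_B, μ_E and variances σ_R² > 0, σ_B² > 0, σ_E² > 0. Then the average secrecy rate satisfies E[ (log₂(1 + min{Γ_R, Γ_B}) − log₂(1 + Γ_E))⁺ ] = (1/ln 2) ∫₀^∞ erfc((μ_E − ln z)/(√2 σ_E)) · erfc((ln z − μ_B)/(√2 σ_B)) · erfc((ln z − μ_R)/(√2 σ_R)) / (8(1+z)) dz. -/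
open MeasureTheory ProbabilityTheory Real Set

/-- The complementary error function `erfc x = (2/√π) ∫_x^∞ e^{−t²} dt`. -/
noncomputable def erfc (x : ℝ) : ℝ :=
  (2 / Real.sqrt π) * ∫ t in Ioi x, Real.exp (-t ^ 2)


lemma erfc_nonneg (x : ℝ) : 0 ≤ erfc x := by
  apply mul_nonneg (by positivity)
  exact setIntegral_nonneg measurableSet_Ioi (fun t _ => (Real.exp_pos _).le)

lemma integral_gaussianPDFReal_Ioi (μ σ a : ℝ) (hσ : 0 < σ) :
    ∫ x in Ioi a, gaussianPDFReal μ ⟨σ ^ 2, sq_nonneg σ⟩ x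
      = erfc ((a - μ) / (Real.sqrt 2 * σ)) / 2 := by
  have hc : (0:ℝ) < Real.sqrt 2 * σ := by positivity
  have hπ : (0:ℝ) < Real.sqrt π := Real.sqrt_pos.mpr Real.pi_pos
  have key : ∀ x : ℝ, gaussianPDFReal μ ⟨σ ^ 2, sq_nonneg σ⟩ x
      = (Real.sqrt 2 * Real.sqrt π * σ)⁻¹
        * Real.exp (-((Real.sqrt 2 * σ)⁻¹ * (x - μ)) ^ 2) := by
    intro x
    unfold gaussianPDFReal
    push_cast
    have h1 : Real.sqrt (2 * π * σ ^ 2) = Real.sqrt 2 * Real.sqrt π * σ := by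
      rw [show 2 * π * σ ^ 2 = (Real.sqrt 2 * Real.sqrt π * σ)^2 by
        rw [mul_pow, mul_pow, Real.sq_sqrt two_pos.le, Real.sq_sqrt Real.pi_pos.le]]
      exact Real.sqrt_sq (by positivity)
    have h2 : -(x - μ) ^ 2 / (2 * σ ^ 2) = -((Real.sqrt 2 * σ)⁻¹ * (x - μ)) ^ 2 := by
      rw [mul_pow, inv_pow, mul_pow, Real.sq_sqrt two_pos.le]
      field_simp
    change (Real.sqrt (2 * π * σ ^ 2))⁻¹ * Real.exp (-(x - μ) ^ 2 / (2 * σ ^ 2)) = _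
    rw [h1, h2]
  simp_rw [key]
  rw [integral_const_mul]
  have shift : ∫ x in Ioi a, Real.exp (-((Real.sqrt 2 * σ)⁻¹ * (x - μ)) ^ 2)
      = ∫ x in Ioi (a - μ), Real.exp (-((Real.sqrt 2 * σ)⁻¹ * x) ^ 2) := by
    rw [← integral_indicator measurableSet_Ioi, ← integral_indicator measurableSet_Ioi]
    rw [← integral_sub_right_eq_self
      (fun x => (Ioi (a - μ)).indicator (fun y => Real.exp (-((Real.sqrt 2 * σ)⁻¹ * y) ^ 2)) x) μ]
    congr 1
    ext x
    by_cases hx : x ∈ Ioi a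
    · rw [indicator_of_mem hx, indicator_of_mem (by simpa [sub_lt_sub_iff_right] using hx)]
    · rw [indicator_of_notMem hx, indicator_of_notMem (by
        simpa [mem_Ioi, sub_lt_sub_iff_right] using hx)]
  rw [shift, integral_comp_mul_left_Ioi (fun t => Real.exp (-t ^ 2)) _ (inv_pos.mpr hc)]
  rw [erfc]
  rw [show (Real.sqrt 2 * σ)⁻¹ * (a - μ) = (a - μ) / (Real.sqrt 2 * σ) by
    rw [inv_mul_eq_div]]
  simp only [smul_eq_mul, inv_inv]
  field_simp

lemma integral_gaussianPDFReal_Iic (μ σ a : ℝ) (hσ : 0 < σ) :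
    ∫ x in Iic a, gaussianPDFReal μ ⟨σ ^ 2, sq_nonneg σ⟩ x
      = erfc ((μ - a) / (Real.sqrt 2 * σ)) / 2 := by
  have h := integral_comp_neg_Ioi (c := -a) (f := gaussianPDFReal μ ⟨σ ^ 2, sq_nonneg σ⟩)
  rw [neg_neg] at h
  rw [← h]
  have : ∀ x : ℝ, gaussianPDFReal μ ⟨σ ^ 2, sq_nonneg σ⟩ (-x)
      = gaussianPDFReal (-μ) ⟨σ ^ 2, sq_nonneg σ⟩ x := by
    intro x
    unfold gaussianPDFReal
    congr 2
    ring
  simp_rw [this]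
  rw [integral_gaussianPDFReal_Ioi _ _ _ hσ]
  ring_nf

lemma gaussianReal_Ioi (μ σ a : ℝ) (hσ : 0 < σ) :
    gaussianReal μ ⟨σ ^ 2, sq_nonneg σ⟩ (Ioi a)
      = ENNReal.ofReal (erfc ((a - μ) / (Real.sqrt 2 * σ)) / 2) := by
  have hv : (⟨σ ^ 2, sq_nonneg σ⟩ : NNReal) ≠ 0 := by
    simp [← NNReal.coe_eq_zero, pow_ne_zero 2 hσ.ne']
  rw [gaussianReal_apply_eq_integral _ hv, integral_gaussianPDFReal_Ioi _ _ _ hσ]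

lemma gaussianReal_Iio (μ σ a : ℝ) (hσ : 0 < σ) :
    gaussianReal μ ⟨σ ^ 2, sq_nonneg σ⟩ (Iio a)
      = ENNReal.ofReal (erfc ((μ - a) / (Real.sqrt 2 * σ)) / 2) := by
  have hv : (⟨σ ^ 2, sq_nonneg σ⟩ : NNReal) ≠ 0 := by
    simp [← NNReal.coe_eq_zero, pow_ne_zero 2 hσ.ne']
  have hnull : gaussianReal μ (⟨σ ^ 2, sq_nonneg σ⟩ : NNReal) {a} = 0 :=
    gaussianReal_absolutelyContinuous _ hv (measure_singleton a)
  have : gaussianReal μ (⟨σ ^ 2, sq_nonneg σ⟩ : NNReal) (Iio a)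
      = gaussianReal μ (⟨σ ^ 2, sq_nonneg σ⟩ : NNReal) (Iic a) := by
    rw [← Iio_union_right (a := a)]
    exact le_antisymm (measure_mono subset_union_left) ((measure_union_le _ _).trans (by rw [hnull, add_zero]))
  rw [this, gaussianReal_apply_eq_integral _ hv, integral_gaussianPDFReal_Iic _ _ _ hσ]

lemma layer (e m : ℝ) (he : 0 < e) (hm : 0 < m) :
    ENNReal.ofReal (max (Real.logb 2 (1 + m) - Real.logb 2 (1 + e)) 0)
      = ENNReal.ofReal (1 / Real.log 2) *
        ∫⁻ z in Ioi (0:ℝ),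
          (Ioo e m).indicator (fun z => ENNReal.ofReal ((1 + z)⁻¹)) z := by
  have hsub : Ioo e m ⊆ Ioi (0:ℝ) := fun z hz => lt_trans he hz.1
  rw [lintegral_indicator measurableSet_Ioo, Measure.restrict_restrict measurableSet_Ioo,
    inter_eq_left.mpr hsub]
  rcases le_or_gt m e with hme | hem
  · rw [Ioo_eq_empty (by exact fun h => absurd hme (not_le.mpr h))]
    simp only [Measure.restrict_empty, lintegral_zero_measure, mul_zero]
    rw [max_eq_right, ENNReal.ofReal_zero]
    rw [sub_nonpos]
    exact Real.logb_le_logb_of_le one_lt_two (by linarith) (by linarith)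
  · have hint : IntegrableOn (fun z => (1 + z)⁻¹) (Ioo e m) volume := by
      apply (ContinuousOn.integrableOn_compact isCompact_Icc ?_).mono_set Ioo_subset_Icc_self
      exact ContinuousOn.inv₀ (by fun_prop) (fun z hz => by nlinarith [hz.1])
    rw [← ofReal_integral_eq_lintegral_ofReal hint
      (ae_restrict_of_forall_mem measurableSet_Ioo
        (fun z hz => inv_nonneg.mpr (by nlinarith [hz.1])))]
    have hI : ∫ z in Ioo e m, (1 + z)⁻¹ = Real.log (1 + m) - Real.log (1 + e) := by
      rw [← integral_Ioc_eq_integral_Ioo, ← intervalIntegral.integral_of_le hem.le]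
      have := intervalIntegral.integral_comp_add_left (a := e) (b := m)
        (fun x => x⁻¹) 1
      rw [this, integral_inv (by
        rw [uIcc_of_le (by linarith)]
        intro h
        have := h.1
        linarith), Real.log_div (by linarith) (by linarith)]
    rw [hI, ← ENNReal.ofReal_mul (by positivity)]
    congr 1
    rw [max_eq_left, Real.logb, Real.logb]
    · field_simp
    · exact sub_nonneg.mpr
        (Real.logb_le_logb_of_le one_lt_two (by linarith) (by linarith))

/-- **Average secrecy rate of the full-duplex relay channel under lognormal fading**
(equation (6) of the paper). -/
theorem avg_secrecy_rate_lognormal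
    {Ω : Type*} [MeasurableSpace Ω] (P : Measure Ω) [IsProbabilityMeasure P]
    (GR GB GE : Ω → ℝ) (hGR : Measurable GR) (hGB : Measurable GB) (hGE : Measurable GE)
    (μR μB μE σR σB σE : ℝ) (hσR : 0 < σR) (hσB : 0 < σB) (hσE : 0 < σE)
    (hR : P.map GR = gaussianReal μR ⟨σR ^ 2, sq_nonneg σR⟩)
    (hB : P.map GB = gaussianReal μB ⟨σB ^ 2, sq_nonneg σB⟩)
    (hE : P.map GE = gaussianReal μE ⟨σE ^ 2, sq_nonneg σE⟩)
    (hindep : iIndepFun ![GR, GB, GE] P) :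
    ∫⁻ ω, ENNReal.ofReal
        (max (Real.logb 2 (1 + min (Real.exp (GR ω)) (Real.exp (GB ω)))
              - Real.logb 2 (1 + Real.exp (GE ω))) 0) ∂P
      = ENNReal.ofReal (1 / Real.log 2) *
        ∫⁻ z in Ioi (0 : ℝ),
          ENNReal.ofReal
            (erfc ((μE - Real.log z) / (Real.sqrt 2 * σE))
              * erfc ((Real.log z - μB) / (Real.sqrt 2 * σB))
              * erfc ((Real.log z - μR) / (Real.sqrt 2 * σR)) / (8 * (1 + z))) := by
  classical
  -- Step 1: pointwise layer-cake representation
  have h1 : ∀ ω : Ω, ENNReal.ofReal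
        (max (Real.logb 2 (1 + min (Real.exp (GR ω)) (Real.exp (GB ω)))
              - Real.logb 2 (1 + Real.exp (GE ω))) 0)
      = ENNReal.ofReal (1 / Real.log 2) *
        ∫⁻ z in Ioi (0:ℝ),
          (Ioo (Real.exp (GE ω)) (min (Real.exp (GR ω)) (Real.exp (GB ω)))).indicator
            (fun z => ENNReal.ofReal ((1 + z)⁻¹)) z := fun ω =>
    layer _ _ (Real.exp_pos _) (lt_min (Real.exp_pos _) (Real.exp_pos _))
  simp_rw [h1]
  rw [lintegral_const_mul' _ _ ENNReal.ofReal_ne_top]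
  congr 1
  -- Step 2: rewrite indicator as indicator of a measurable set in the product space
  set A : Set (Ω × ℝ) := {p : Ω × ℝ | Real.exp (GE p.1) < p.2 ∧
      p.2 < Real.exp (GR p.1) ∧ p.2 < Real.exp (GB p.1)} with hA
  have hAmeas : MeasurableSet A := by
    apply MeasurableSet.inter
    · exact measurableSet_lt ((Real.measurable_exp.comp hGE).comp measurable_fst) measurable_snd
    · exact (measurableSet_lt measurable_snd
        ((Real.measurable_exp.comp hGR).comp measurable_fst)).inter
        (measurableSet_lt measurable_snd ((Real.measurable_exp.comp hGB).comp measurable_fst))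
  have hFA : ∀ ω z, (Ioo (Real.exp (GE ω)) (min (Real.exp (GR ω)) (Real.exp (GB ω)))).indicator
        (fun z => ENNReal.ofReal ((1 + z)⁻¹)) z
      = A.indicator (fun p : Ω × ℝ => ENNReal.ofReal ((1 + p.2)⁻¹)) (ω, z) := by
    intro ω z
    rw [indicator_apply, indicator_apply]
    congr 1
    simp [mem_Ioo, lt_min_iff, hA, and_assoc]
  simp_rw [hFA]
  -- Step 3: Tonelli
  rw [lintegral_lintegral_swap]
  swap
  · exact ((measurable_const.add measurable_snd).inv.ennreal_ofReal.indicator hAmeas).aemeasurable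
  -- Step 4: compute the inner integral for each z > 0
  apply setLIntegral_congr_fun measurableSet_Ioi
  intro z hz
  have hz0 : (0:ℝ) < z := hz
  have hSmem : ∀ ω : Ω, ((ω, z) ∈ A) ↔
      ω ∈ (GE ⁻¹' Iio (Real.log z) ∩ (GR ⁻¹' Ioi (Real.log z) ∩ GB ⁻¹' Ioi (Real.log z))) := by
    intro ω
    simp only [hA, mem_setOf_eq, mem_inter_iff, mem_preimage, mem_Iio, mem_Ioi]
    rw [← Real.lt_log_iff_exp_lt hz0, ← Real.log_lt_iff_lt_exp hz0, ← Real.log_lt_iff_lt_exp hz0]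
  have hind : ∀ ω : Ω, A.indicator (fun p : Ω × ℝ => ENNReal.ofReal ((1 + p.2)⁻¹)) (ω, z)
      = (GE ⁻¹' Iio (Real.log z) ∩ (GR ⁻¹' Ioi (Real.log z) ∩ GB ⁻¹' Ioi (Real.log z))).indicator
          (fun _ : Ω => ENNReal.ofReal ((1 + z)⁻¹)) ω := by
    intro ω
    rw [indicator_apply, indicator_apply]
    congr 1
    simp [hSmem ω]
  simp_rw [hind]
  rw [lintegral_indicator_const]
  swap
  · exact (hGE measurableSet_Iio).inter ((hGR measurableSet_Ioi).inter (hGB measurableSet_Ioi))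
  -- Step 5: independence
  set L := Real.log z
  have hprod : P (GE ⁻¹' Iio L ∩ (GR ⁻¹' Ioi L ∩ GB ⁻¹' Ioi L))
      = P (GR ⁻¹' Ioi L) * P (GB ⁻¹' Ioi L) * P (GE ⁻¹' Iio L) := by
    have := hindep.measure_inter_preimage_eq_mul (S := Finset.univ)
      (sets := ![Ioi L, Ioi L, Iio L]) (fun i _ => by
        fin_cases i <;> simp [measurableSet_Ioi, measurableSet_Iio])
    rw [show (⋂ i ∈ Finset.univ, (![GR, GB, GE] i) ⁻¹' (![Ioi L, Ioi L, Iio L] i))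
        = GE ⁻¹' Iio L ∩ (GR ⁻¹' Ioi L ∩ GB ⁻¹' Ioi L) by
      ext ω
      simp [Fin.forall_fin_succ, and_comm, and_assoc, and_left_comm]] at this
    rw [this, Fin.prod_univ_three]
    simp
  rw [hprod]
  -- Step 6: compute each factor via the Gaussian CDF
  have hPR : P (GR ⁻¹' Ioi L) = ENNReal.ofReal (erfc ((L - μR) / (Real.sqrt 2 * σR)) / 2) := by
    rw [← Measure.map_apply hGR measurableSet_Ioi, hR, gaussianReal_Ioi _ _ _ hσR]
  have hPB : P (GB ⁻¹' Ioi L) = ENNReal.ofReal (erfc ((L - μB) / (Real.sqrt 2 * σB)) / 2) := by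
    rw [← Measure.map_apply hGB measurableSet_Ioi, hB, gaussianReal_Ioi _ _ _ hσB]
  have hPE : P (GE ⁻¹' Iio L) = ENNReal.ofReal (erfc ((μE - L) / (Real.sqrt 2 * σE)) / 2) := by
    rw [← Measure.map_apply hGE measurableSet_Iio, hE, gaussianReal_Iio _ _ _ hσE]
  rw [hPR, hPB, hPE]
  have h1z : (0:ℝ) < 1 + z := by linarith
  rw [← ENNReal.ofReal_mul (div_nonneg (erfc_nonneg _) (by norm_num)),
    ← ENNReal.ofReal_mul (mul_nonneg (div_nonneg (erfc_nonneg _) (by norm_num))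
      (div_nonneg (erfc_nonneg _) (by norm_num))),
    ← ENNReal.ofReal_mul (inv_nonneg.mpr h1z.le)]
  congr 1
  field_simp
  ring
end

section
/- Let Γ_R = exp(G_R), Γ_B = exp(G_B), Γ_E = exp(G_E), where G_R, G_B, G_E are mutually independent real Gaussian random variables with means μ_R, μ_B, μ_E and variances σ_R² > 0, σ_B² > 0, σ_E² > 0, and let R_s > 0. Then the secrecy outage probability satisfies P[ log₂(1 + min{Γ_R, Γ_B}) − log₂(1 + Γ_E) < R_s ] = 1 − (1/(4√π)) ∫_{−∞}^{∞} e^{−t²} · erfc((ln υ(t) − μ_B)/(√2 σ_B)) · erfc((ln υ(t) − μ_R)/(√2 σ_R)) dt, where υ(t) = 2^{R_s}( e^{μ_E + √2 σ_E t} + 1 ) − 1. -/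
open MeasureTheory ProbabilityTheory Real Set

lemma aux_integral_Ioi_exp_neg_sq (c : ℝ) :
    ∫ t in Ioi c, Real.exp (-t ^ 2) = Real.sqrt π / 2 * erfc c := by
  have h : Real.sqrt π ≠ 0 := (Real.sqrt_pos.mpr Real.pi_pos).ne'
  rw [erfc]; field_simp

lemma aux_setIntegral_Ioi_comp_sub (f : ℝ → ℝ) (a d : ℝ) :
    ∫ x in Ioi a, f (x - d) = ∫ y in Ioi (a - d), f y := by
  rw [← integral_indicator measurableSet_Ioi, ← integral_indicator measurableSet_Ioi,
    ← integral_sub_right_eq_self ((Ioi (a - d)).indicator f) d]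
  congr 1
  ext x
  rw [indicator_apply, indicator_apply]
  have hmem : x ∈ Ioi a ↔ x - d ∈ Ioi (a - d) := by simp [sub_lt_sub_iff_right]
  by_cases h : x ∈ Ioi a
  · rw [if_pos h, if_pos (hmem.mp h)]
  · rw [if_neg h, if_neg fun hh => h (hmem.mpr hh)]

lemma aux_sqrt_two_pi (σ : ℝ) (hσ : 0 < σ) :
    Real.sqrt (2 * π * σ ^ 2) = Real.sqrt 2 * σ * Real.sqrt π := by
  rw [show 2 * π * σ ^ 2 = 2 * (π * σ ^ 2) by ring, Real.sqrt_mul (by norm_num),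
    Real.sqrt_mul Real.pi_pos.le, Real.sqrt_sq hσ.le]
  ring

lemma aux_pdf_eq (μ : ℝ) {σ : ℝ} (hσ : 0 < σ) (x : ℝ) :
    gaussianPDFReal μ ⟨σ ^ 2, sq_nonneg σ⟩ x
      = (Real.sqrt 2 * σ * Real.sqrt π)⁻¹ * Real.exp (-(((x - μ) * (Real.sqrt 2 * σ)⁻¹) ^ 2)) := by
  have h2 : (Real.sqrt 2 * σ) ^ 2 = 2 * σ ^ 2 := by
    rw [mul_pow, Real.sq_sqrt (by norm_num : (0:ℝ) ≤ 2)]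
  have hne : Real.sqrt 2 * σ ≠ 0 := by positivity
  unfold gaussianPDFReal
  change (√(2 * π * σ ^ 2))⁻¹ * rexp (-(x - μ) ^ 2 / (2 * σ ^ 2)) = _
  rw [aux_sqrt_two_pi σ hσ]
  congr 1
  rw [mul_pow, inv_pow, h2]
  ring

lemma aux_gaussian_tail (μ : ℝ) {σ : ℝ} (hσ : 0 < σ) (c : ℝ) :
    ((gaussianReal μ ⟨σ ^ 2, sq_nonneg σ⟩) (Ici c)).toReal
      = 2⁻¹ * erfc ((c - μ) / (Real.sqrt 2 * σ)) := by
  have hv : (⟨σ ^ 2, sq_nonneg σ⟩ : NNReal) ≠ 0 := by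
    intro h
    exact pow_ne_zero 2 hσ.ne' (congrArg NNReal.toReal h)
  have hb : (0:ℝ) < (Real.sqrt 2 * σ)⁻¹ := by positivity
  have hcσ : (0:ℝ) < Real.sqrt 2 * σ := by positivity
  rw [gaussianReal_apply_eq_integral _ hv,
    ENNReal.toReal_ofReal (integral_nonneg fun x => gaussianPDFReal_nonneg μ (⟨σ ^ 2, sq_nonneg σ⟩ : NNReal) x)]
  rw [MeasureTheory.integral_Ici_eq_integral_Ioi]
  calc ∫ x in Ioi c, gaussianPDFReal μ ⟨σ ^ 2, sq_nonneg σ⟩ x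
      = ∫ x in Ioi c, (Real.sqrt 2 * σ * Real.sqrt π)⁻¹
          * Real.exp (-(((x - μ) * (Real.sqrt 2 * σ)⁻¹) ^ 2)) := by
        exact setIntegral_congr_fun measurableSet_Ioi fun x _ => aux_pdf_eq μ hσ x
    _ = (Real.sqrt 2 * σ * Real.sqrt π)⁻¹
          * ∫ x in Ioi c, Real.exp (-(((x - μ) * (Real.sqrt 2 * σ)⁻¹) ^ 2)) := by
        rw [MeasureTheory.integral_const_mul]
    _ = (Real.sqrt 2 * σ * Real.sqrt π)⁻¹
          * ∫ y in Ioi (c - μ), Real.exp (-((y * (Real.sqrt 2 * σ)⁻¹) ^ 2)) := by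
        rw [aux_setIntegral_Ioi_comp_sub (fun y => Real.exp (-((y * (Real.sqrt 2 * σ)⁻¹) ^ 2))) c μ]
    _ = (Real.sqrt 2 * σ * Real.sqrt π)⁻¹ * (((Real.sqrt 2 * σ)⁻¹)⁻¹
          • ∫ u in Ioi ((c - μ) * (Real.sqrt 2 * σ)⁻¹), Real.exp (-u ^ 2)) := by
        rw [MeasureTheory.integral_comp_mul_right_Ioi (fun u => Real.exp (-u ^ 2)) (c - μ) hb]
    _ = 2⁻¹ * erfc ((c - μ) / (Real.sqrt 2 * σ)) := by
        rw [inv_inv, smul_eq_mul, aux_integral_Ioi_exp_neg_sq, div_eq_mul_inv]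
        have hπ : Real.sqrt π ≠ 0 := (Real.sqrt_pos.mpr Real.pi_pos).ne'
        field_simp

lemma aux_measurable_tail (m : Measure ℝ) [IsFiniteMeasure m] :
    Measurable fun c : ℝ => (m (Ici c)).toReal :=
  Antitone.measurable fun _ _ hxy =>
    ENNReal.toReal_mono (measure_ne_top m _) (measure_mono (Ici_subset_Ici.mpr hxy))

lemma aux_integral_gaussianReal (μ : ℝ) {v : NNReal} (hv : v ≠ 0) (F : ℝ → ℝ) :
    ∫ x, F x ∂(gaussianReal μ v) = ∫ x, gaussianPDFReal μ v x * F x := by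
  rw [gaussianReal_of_var_ne_zero _ hv]
  have hpdf : gaussianPDF μ v = fun x => ((gaussianPDFReal μ v x).toNNReal : ENNReal) := rfl
  rw [hpdf, integral_withDensity_eq_integral_smul (measurable_gaussianPDFReal μ v).real_toNNReal]
  congr 1
  ext x
  rw [NNReal.smul_def, smul_eq_mul, Real.coe_toNNReal _ (gaussianPDFReal_nonneg _ _ _)]

lemma aux_gaussian_subst (μ : ℝ) {σ : ℝ} (hσ : 0 < σ) (F : ℝ → ℝ) :
    ∫ x, gaussianPDFReal μ ⟨σ ^ 2, sq_nonneg σ⟩ x * F x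
      = (Real.sqrt π)⁻¹ * ∫ t, Real.exp (-t ^ 2) * F (μ + Real.sqrt 2 * σ * t) := by
  have hc : (0:ℝ) < Real.sqrt 2 * σ := by positivity
  set c := Real.sqrt 2 * σ with hcdef
  set G : ℝ → ℝ := fun z => Real.exp (-(((z - μ) * c⁻¹) ^ 2)) * F z with hGdef
  have h1 : ∀ x, gaussianPDFReal μ ⟨σ ^ 2, sq_nonneg σ⟩ x * F x = (c * Real.sqrt π)⁻¹ * G x := by
    intro x
    rw [aux_pdf_eq μ hσ x, hGdef, mul_assoc]
  rw [integral_congr_ae (ae_of_all _ h1), MeasureTheory.integral_const_mul]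
  have h2 : (∫ x : ℝ, G (μ + c * x)) = |c⁻¹| • ∫ y, G (μ + y) :=
    MeasureTheory.Measure.integral_comp_mul_left (fun y => G (μ + y)) c
  have h3 : (∫ y : ℝ, G (μ + y)) = ∫ z, G z := integral_add_left_eq_self G μ
  have harg : ∀ t : ℝ, (μ + c * t - μ) * c⁻¹ = t := by
    intro t
    rw [add_sub_cancel_left, mul_comm c t, mul_assoc, mul_inv_cancel₀ hc.ne', mul_one]
  have h4 : ∀ t : ℝ, G (μ + c * t) = Real.exp (-t ^ 2) * F (μ + c * t) := by
    intro t
    rw [hGdef]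
    beta_reduce
    rw [harg t]
  have h5 : (∫ z, G z) = c * ∫ t, Real.exp (-t ^ 2) * F (μ + c * t) := by
    rw [← integral_congr_ae (ae_of_all _ h4), h2, h3, abs_of_pos (inv_pos.mpr hc), smul_eq_mul,
      ← mul_assoc, mul_inv_cancel₀ hc.ne', one_mul]
  rw [h5]
  have hπ : Real.sqrt π ≠ 0 := (Real.sqrt_pos.mpr Real.pi_pos).ne'
  field_simp

/-- The secrecy threshold `ln υ(z)` where `υ(z) = 2^Rs (e^z + 1) − 1`. -/
noncomputable def thr (Rs z : ℝ) : ℝ := Real.log ((2 : ℝ) ^ Rs * (Real.exp z + 1) - 1)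

lemma thr_measurable (Rs : ℝ) : Measurable (thr Rs) :=
  Real.measurable_log.comp
    ((measurable_const.mul (Real.measurable_exp.add measurable_const)).sub measurable_const)

lemma aux_upos {Rs : ℝ} (hRs : 0 < Rs) (z : ℝ) :
    0 < (2 : ℝ) ^ Rs * (Real.exp z + 1) - 1 := by
  have h1 : (1:ℝ) ≤ (2:ℝ) ^ Rs := by
    have := Real.rpow_le_rpow_of_exponent_le (by norm_num : (1:ℝ) ≤ 2) hRs.le
    simpa using this
  nlinarith [Real.exp_pos z]

lemma aux_event_iff {Rs : ℝ} (hRs : 0 < Rs) (r b e : ℝ) :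
    Real.logb 2 (1 + min (Real.exp r) (Real.exp b)) - Real.logb 2 (1 + Real.exp e) < Rs
      ↔ r < thr Rs e ∨ b < thr Rs e := by
  have hm0 : 0 < min (Real.exp r) (Real.exp b) := lt_min (Real.exp_pos _) (Real.exp_pos _)
  have hA0 : (0:ℝ) < 1 + min (Real.exp r) (Real.exp b) := by positivity
  have hB0 : (0:ℝ) < 1 + Real.exp e := by positivity
  have hC0 : (0:ℝ) < (2:ℝ) ^ Rs * (1 + Real.exp e) := by positivity
  rw [sub_lt_iff_lt_add,
    show Rs + Real.logb 2 (1 + Real.exp e) = Real.logb 2 ((2:ℝ) ^ Rs * (1 + Real.exp e)) by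
      rw [Real.logb_mul (by positivity) hB0.ne', Real.logb_rpow two_pos (by norm_num)],
    Real.logb_lt_logb_iff one_lt_two hA0 hC0,
    show (1 + min (Real.exp r) (Real.exp b) < (2:ℝ) ^ Rs * (1 + Real.exp e))
        ↔ min (Real.exp r) (Real.exp b) < (2:ℝ) ^ Rs * (Real.exp e + 1) - 1 from by
      constructor <;> intro h <;> nlinarith,
    min_lt_iff, thr, ← Real.lt_log_iff_exp_lt (aux_upos hRs e),
    ← Real.lt_log_iff_exp_lt (aux_upos hRs e)]

/-- **Secrecy outage probability of the full-duplex relay channel under lognormal fading**,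
in exact Gauss–Hermite form (the identity underlying Theorem 3 of the paper). -/
theorem secrecy_outage_lognormal
    {Ω : Type*} [MeasurableSpace Ω] (P : Measure Ω) [IsProbabilityMeasure P]
    (GR GB GE : Ω → ℝ) (hGR : Measurable GR) (hGB : Measurable GB) (hGE : Measurable GE)
    (μR μB μE σR σB σE : ℝ) (hσR : 0 < σR) (hσB : 0 < σB) (hσE : 0 < σE)
    (hR : P.map GR = gaussianReal μR ⟨σR ^ 2, sq_nonneg σR⟩)
    (hB : P.map GB = gaussianReal μB ⟨σB ^ 2, sq_nonneg σB⟩)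
    (hE : P.map GE = gaussianReal μE ⟨σE ^ 2, sq_nonneg σE⟩)
    (hindep : iIndepFun ![GR, GB, GE] P)
    (Rs : ℝ) (hRs : 0 < Rs) :
    (P {ω | Real.logb 2 (1 + min (Real.exp (GR ω)) (Real.exp (GB ω)))
            - Real.logb 2 (1 + Real.exp (GE ω)) < Rs}).toReal
      = 1 - (1 / (4 * Real.sqrt π)) *
          ∫ t : ℝ, Real.exp (-t ^ 2)
            * erfc ((Real.log ((2 : ℝ) ^ Rs * (Real.exp (μE + Real.sqrt 2 * σE * t) + 1) - 1) - μB)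
                / (Real.sqrt 2 * σB))
            * erfc ((Real.log ((2 : ℝ) ^ Rs * (Real.exp (μE + Real.sqrt 2 * σE * t) + 1) - 1) - μR)
                / (Real.sqrt 2 * σR)) := by
  have hvE : (⟨σE ^ 2, sq_nonneg σE⟩ : NNReal) ≠ 0 := by
    intro h
    exact pow_ne_zero 2 hσE.ne' (congrArg NNReal.toReal h)
  set νR := gaussianReal μR ⟨σR ^ 2, sq_nonneg σR⟩ with hνRdef
  set νB := gaussianReal μB ⟨σB ^ 2, sq_nonneg σB⟩ with hνBdef
  set νE := gaussianReal μE ⟨σE ^ 2, sq_nonneg σE⟩ with hνEdef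
  haveI : IsProbabilityMeasure νR := by rw [hνRdef]; exact instIsProbabilityMeasureGaussianReal _ _
  haveI : IsProbabilityMeasure νB := by rw [hνBdef]; exact instIsProbabilityMeasureGaussianReal _ _
  haveI : IsProbabilityMeasure νE := by rw [hνEdef]; exact instIsProbabilityMeasureGaussianReal _ _
  -- rewrite the event
  have hset : {ω | Real.logb 2 (1 + min (Real.exp (GR ω)) (Real.exp (GB ω)))
      - Real.logb 2 (1 + Real.exp (GE ω)) < Rs}
      = {ω | GR ω < thr Rs (GE ω) ∨ GB ω < thr Rs (GE ω)} := by
    ext ω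
    simp only [mem_setOf_eq]
    exact aux_event_iff hRs _ _ _
  set C : Set Ω := {ω | thr Rs (GE ω) ≤ GR ω ∧ thr Rs (GE ω) ≤ GB ω} with hCdef
  have hCmeas : MeasurableSet C :=
    (measurableSet_le ((thr_measurable Rs).comp hGE) hGR).inter
      (measurableSet_le ((thr_measurable Rs).comp hGE) hGB)
  have hcompl : Cᶜ = {ω | GR ω < thr Rs (GE ω) ∨ GB ω < thr Rs (GE ω)} := by
    ext ω
    simp only [hCdef, mem_compl_iff, mem_setOf_eq, not_and_or, not_le]
  have hPS : P {ω | Real.logb 2 (1 + min (Real.exp (GR ω)) (Real.exp (GB ω)))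
      - Real.logb 2 (1 + Real.exp (GE ω)) < Rs} = 1 - P C := by
    rw [hset, ← hcompl, prob_compl_eq_one_sub hCmeas]
  -- joint law
  have hmeas_i : ∀ i, Measurable (![GR, GB, GE] i) := by
    intro i
    fin_cases i
    · exact hGR
    · exact hGB
    · exact hGE
  have hpairE : IndepFun GE (fun ω => (GR ω, GB ω)) P := by
    have := (hindep.indepFun_prodMk hmeas_i 0 1 2 (by decide) (by decide)).symm
    simpa using this
  have h01 : IndepFun GR GB P := by
    have := hindep.indepFun (show (0 : Fin 3) ≠ 1 by decide)
    simpa using this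
  have hmapPair : P.map (fun ω => (GR ω, GB ω)) = νR.prod νB := by
    rw [(indepFun_iff_map_prod_eq_prod_map_map hGR.aemeasurable hGB.aemeasurable).mp h01, hR, hB]
  have hmapTriple : P.map (fun ω => (GE ω, (GR ω, GB ω))) = νE.prod (νR.prod νB) := by
    rw [(indepFun_iff_map_prod_eq_prod_map_map hGE.aemeasurable
      (hGR.prodMk hGB).aemeasurable).mp hpairE, hmapPair, hE]
  set T : Set (ℝ × (ℝ × ℝ)) := {q | thr Rs q.1 ≤ q.2.1 ∧ thr Rs q.1 ≤ q.2.2} with hTdef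
  have hT : MeasurableSet T :=
    (measurableSet_le ((thr_measurable Rs).comp measurable_fst)
        (measurable_fst.comp measurable_snd)).inter
      (measurableSet_le ((thr_measurable Rs).comp measurable_fst)
        (measurable_snd.comp measurable_snd))
  have hPC : P C = ∫⁻ z, νR (Ici (thr Rs z)) * νB (Ici (thr Rs z)) ∂νE := by
    have hpre : C = (fun ω => (GE ω, (GR ω, GB ω))) ⁻¹' T := rfl
    rw [hpre, ← Measure.map_apply (hGE.prodMk (hGR.prodMk hGB)) hT, hmapTriple,
      Measure.prod_apply hT]
    refine lintegral_congr fun z => ?_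
    have hfib : (Prod.mk z ⁻¹' T) = Ici (thr Rs z) ×ˢ Ici (thr Rs z) := by
      ext p
      simp [hTdef, Set.mem_prod, mem_Ici, Prod.le_def]
    rw [hfib, Measure.prod_prod]
  set g : ℝ → ℝ := fun z => (νR (Ici (thr Rs z))).toReal * (νB (Ici (thr Rs z))).toReal with hgdef
  have hgmeas : Measurable g :=
    ((aux_measurable_tail νR).comp (thr_measurable Rs)).mul
      ((aux_measurable_tail νB).comp (thr_measurable Rs))
  have hg0 : ∀ z, 0 ≤ g z := fun z => mul_nonneg ENNReal.toReal_nonneg ENNReal.toReal_nonneg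
  have hg1 : ∀ z, g z ≤ 1 := by
    intro z
    have h1 : (νR (Ici (thr Rs z))).toReal ≤ 1 := by
      simpa using ENNReal.toReal_mono ENNReal.one_ne_top prob_le_one
    have h2 : (νB (Ici (thr Rs z))).toReal ≤ 1 := by
      simpa using ENNReal.toReal_mono ENNReal.one_ne_top prob_le_one
    calc g z ≤ 1 * 1 :=
          mul_le_mul h1 h2 ENNReal.toReal_nonneg zero_le_one
      _ = 1 := mul_one 1
  have hgint : Integrable g νE :=
    (integrable_const (1:ℝ)).mono' hgmeas.aestronglyMeasurable
      (ae_of_all _ fun z => by rw [Real.norm_of_nonneg (hg0 z)]; exact hg1 z)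
  have hPC2 : (P C).toReal = ∫ z, g z ∂νE := by
    have hpt : ∀ z, νR (Ici (thr Rs z)) * νB (Ici (thr Rs z)) = ENNReal.ofReal (g z) := by
      intro z
      rw [hgdef]
      beta_reduce
      rw [ENNReal.ofReal_mul ENNReal.toReal_nonneg, ENNReal.ofReal_toReal (measure_ne_top _ _),
        ENNReal.ofReal_toReal (measure_ne_top _ _)]
    rw [hPC, lintegral_congr hpt,
      ← ofReal_integral_eq_lintegral_ofReal hgint (ae_of_all _ hg0),
      ENNReal.toReal_ofReal (integral_nonneg hg0)]
  have hgz : ∀ z, g z = 4⁻¹ * (erfc ((thr Rs z - μB) / (Real.sqrt 2 * σB))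
      * erfc ((thr Rs z - μR) / (Real.sqrt 2 * σR))) := by
    intro z
    rw [hgdef]
    beta_reduce
    rw [hνRdef, hνBdef, aux_gaussian_tail μR hσR, aux_gaussian_tail μB hσB]
    ring
  have hint2 : ∫ z, g z ∂νE
      = 4⁻¹ * ((Real.sqrt π)⁻¹ * ∫ t, Real.exp (-t ^ 2) *
          (erfc ((thr Rs (μE + Real.sqrt 2 * σE * t) - μB) / (Real.sqrt 2 * σB)) *
           erfc ((thr Rs (μE + Real.sqrt 2 * σE * t) - μR) / (Real.sqrt 2 * σR)))) := by
    rw [integral_congr_ae (ae_of_all _ hgz), MeasureTheory.integral_const_mul, hνEdef,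
      aux_integral_gaussianReal μE hvE, aux_gaussian_subst μE hσE]
  rw [hPS, ENNReal.toReal_sub_of_le prob_le_one ENNReal.one_ne_top, ENNReal.toReal_one,
    hPC2, hint2]
  simp only [thr, ← mul_assoc]
  ring
end

section
/- Let μ be the Gamma distribution on (0, ∞) with shape m > 0 and rate r > 0, i.e. with density x ↦ r^m x^{m−1} e^{−r x} / Γ(m) with respect to Lebesgue measure. Then the variance of ln under μ equals the Hurwitz zeta value ζ(2, m): ∫₀^∞ (ln x)² dμ(x) − (∫₀^∞ ln x dμ(x))² = ∑_{k=0}^{∞} 1/(m + k)². -/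
open MeasureTheory ProbabilityTheory Real Set

/-- The Gamma distribution on `(0, ∞)` with shape `m` and rate `r`, given by the density
`x ↦ r^m x^{m−1} e^{−r x} / Γ(m)` with respect to Lebesgue measure. -/
noncomputable def gammaDist (m r : ℝ) : Measure ℝ :=
  (volume.restrict (Ioi (0 : ℝ))).withDensity fun x =>
    ENNReal.ofReal (r ^ m * x ^ (m - 1) * Real.exp (-r * x) / Real.Gamma m)

set_option maxHeartbeats 1000000

namespace GVL

open Filter Topology Asymptotics
open scoped NNReal ENNReal


/-- integrand -/
noncomputable def g (n : ℕ) (t : ℝ) : ℝ := (Real.log t) ^ n * Real.exp (-t)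

noncomputable def J (n : ℕ) (s : ℝ) : ℝ := ∫ t in Ioi (0:ℝ), t ^ (s - 1) * g n t

lemma g_top (n : ℕ) (a : ℝ) : (g n) =O[atTop] (· ^ (-a)) := by
  induction n generalizing a with
  | zero =>
    have h : Tendsto (fun t : ℝ => g 0 t / t ^ (-a)) atTop (𝓝 0) := by
      have := tendsto_rpow_mul_exp_neg_mul_atTop_nhds_zero a 1 one_pos
      refine this.congr' ?_
      filter_upwards [eventually_gt_atTop (0:ℝ)] with t ht
      rw [g, pow_zero, one_mul, div_eq_mul_inv, ← Real.rpow_neg ht.le, neg_neg, neg_mul, one_mul,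
        mul_comm]
    refine (Asymptotics.isLittleO_iff_tendsto' ?_).2 h |>.isBigO
    filter_upwards [eventually_gt_atTop (0:ℝ)] with t ht h0
    exact absurd h0 (Real.rpow_pos_of_pos ht _).ne'
  | succ n ih =>
    have := isBigO_rpow_top_log_smul (f := g n) (a := a + 1) (b := a) (by linarith) (ih (a + 1))
    refine this.congr_left fun t => ?_
    simp only [g, smul_eq_mul, pow_succ]
    ring

lemma g_zero (n : ℕ) {b : ℝ} (hb : 0 < b) : (g n) =O[𝓝[>] (0:ℝ)] (· ^ (-b)) := by
  induction n generalizing b with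
  | zero =>
    refine Asymptotics.IsBigO.of_bound 1 ?_
    filter_upwards [self_mem_nhdsWithin, Ioo_mem_nhdsGT one_pos] with t ht ht1
    have ht0 : (0:ℝ) < t := ht
    rw [g, pow_zero, one_mul, Real.norm_eq_abs, Real.norm_eq_abs, abs_of_pos (Real.exp_pos _),
      abs_of_pos (Real.rpow_pos_of_pos ht0 _), one_mul]
    calc Real.exp (-t) ≤ 1 := Real.exp_le_one_iff.2 (by linarith)
    _ ≤ t ^ (-b) := by
        rw [← Real.rpow_zero t]
        exact Real.rpow_le_rpow_of_exponent_ge ht0 ht1.2.le (by linarith)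
  | succ n ih =>
    have := isBigO_rpow_zero_log_smul (f := g n) (a := b/2) (b := b) (by linarith) (ih (by linarith))
    refine this.congr_left fun t => ?_
    simp only [g, smul_eq_mul, pow_succ]
    ring

lemma g_cont (n : ℕ) : ContinuousOn (g n) (Ioi (0:ℝ)) := by
  refine ContinuousOn.mul ?_ (Real.continuous_exp.comp continuous_neg).continuousOn
  exact (Real.continuousOn_log.mono fun x hx => ne_of_gt hx).pow n

lemma g_locint (n : ℕ) : LocallyIntegrableOn (g n) (Ioi (0:ℝ)) :=
  (g_cont n).locallyIntegrableOn measurableSet_Ioi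

lemma J_integrable (n : ℕ) {s : ℝ} (hs : 0 < s) :
    IntegrableOn (fun t : ℝ => t ^ (s - 1) * g n t) (Ioi (0:ℝ)) :=
  mellin_convergent_of_isBigO_scalar (g_locint n) (g_top n (s+1)) (by linarith)
    (g_zero n (half_pos hs)) (by linarith)

noncomputable def gc (n : ℕ) (t : ℝ) : ℂ := ((g n t : ℝ) : ℂ)

lemma gc_top (n : ℕ) (a : ℝ) : (gc n) =O[atTop] (· ^ (-a)) :=
  ((g_top n a).norm_left.congr_left fun t => (Complex.norm_real _).symm).of_norm_left

lemma gc_zero (n : ℕ) {b : ℝ} (hb : 0 < b) : (gc n) =O[𝓝[>] (0:ℝ)] (· ^ (-b)) :=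
  ((g_zero n hb).norm_left.congr_left fun t => (Complex.norm_real _).symm).of_norm_left

lemma gc_locint (n : ℕ) : LocallyIntegrableOn (gc n) (Ioi (0:ℝ)) :=
  ((Complex.continuous_ofReal.comp_continuousOn (g_cont n)).locallyIntegrableOn measurableSet_Ioi)

lemma mellin_gc_eq (n : ℕ) {s : ℝ} (hs : 0 < s) : mellin (gc n) (s : ℂ) = ((J n s : ℝ) : ℂ) := by
  have hfun : ∀ t ∈ Ioi (0:ℝ), (t : ℂ) ^ ((s : ℂ) - 1) • gc n t = ((t ^ (s - 1) * g n t : ℝ) : ℂ) := by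
    intro t ht
    have h1 : (t : ℂ) ^ ((s : ℂ) - 1) = ((t ^ (s - 1) : ℝ) : ℂ) := by
      rw [Complex.ofReal_cpow (le_of_lt ht)]
      push_cast
      rfl
    rw [gc, smul_eq_mul, h1, ← Complex.ofReal_mul]
  rw [mellin, setIntegral_congr_fun measurableSet_Ioi hfun, J]
  exact integral_ofReal (𝕜 := ℂ)

lemma hasDerivAt_J (n : ℕ) {s : ℝ} (hs : 0 < s) : HasDerivAt (J n) (J (n+1) s) s := by
  have hre : (s : ℂ).re = s := Complex.ofReal_re s
  have key := mellin_hasDerivAt_of_isBigO_rpow (f := gc n) (s := (s : ℂ)) (a := s + 1)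
    (b := s / 2) (gc_locint n) (gc_top n (s+1)) (by rw [hre]; linarith)
    (gc_zero n (half_pos hs)) (by rw [hre]; linarith)
  have hD := key.2
  have hfun : (fun t : ℝ => Real.log t • gc n t) = gc (n+1) := by
    funext t
    simp only [gc, g, Complex.real_smul]
    push_cast
    ring
  rw [hfun] at hD
  have hD' := hD.real_of_complex
  have hEq : (fun x : ℝ => (mellin (gc n) (x : ℂ)).re) =ᶠ[𝓝 s] J n := by
    filter_upwards [eventually_gt_nhds hs] with x hx
    rw [mellin_gc_eq n hx, Complex.ofReal_re]
  have hval : (mellin (gc (n+1)) (s : ℂ)).re = J (n+1) s := by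
    rw [mellin_gc_eq (n+1) hs, Complex.ofReal_re]
  rw [hval] at hD'
  exact hD'.congr_of_eventuallyEq hEq.symm

lemma J_zero_eq_Gamma {s : ℝ} (hs : 0 < s) : J 0 s = Real.Gamma s := by
  rw [Real.Gamma_eq_integral hs, J]
  refine setIntegral_congr_fun measurableSet_Ioi fun t ht => ?_
  simp only [g, pow_zero, one_mul]
  ring



noncomputable def trig (x : ℝ) : ℝ := ∑' k : ℕ, 1 / (x + k) ^ 2
noncomputable def dig (x : ℝ) : ℝ :=
  -Real.eulerMascheroniConstant + ∑' j : ℕ, (1 / ((j : ℝ) + 1) - 1 / (x + j))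

noncomputable def fN (n : ℕ) (x : ℝ) : ℝ :=
  x * Real.log n + Real.log (Nat.factorial n : ℝ) - ∑ j ∈ Finset.range (n+1), Real.log (x + j)
noncomputable def fN' (n : ℕ) (x : ℝ) : ℝ :=
  Real.log n - ∑ j ∈ Finset.range (n+1), 1 / (x + j)
noncomputable def fN'' (n : ℕ) (x : ℝ) : ℝ := ∑ j ∈ Finset.range (n+1), 1 / (x + j) ^ 2

lemma base_summable : Summable (fun j : ℕ => 1 / ((j : ℝ) + 1) ^ 2) := by
  have h := (_root_.summable_nat_add_iff (f := fun n : ℕ => 1 / (n : ℝ) ^ 2) 1).2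
    (Real.summable_one_div_nat_pow.2 one_lt_two)
  refine h.congr fun j => ?_
  push_cast
  ring_nf

lemma sq_summable {a : ℝ} (ha : 0 < a) : Summable (fun j : ℕ => 1 / (a + j) ^ 2) := by
  set c := min a 1 with hc
  have hc0 : 0 < c := lt_min ha one_pos
  refine Summable.of_nonneg_of_le (fun j => by positivity)
    (fun j => ?_) (base_summable.mul_left (1 / c ^ 2))
  have h1 : c * ((j : ℝ) + 1) ≤ a + j := by
    have h2 : c ≤ a := min_le_left _ _
    have h3 : c * j ≤ j := by
      nlinarith [min_le_right a 1, Nat.cast_nonneg (α := ℝ) j]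
    nlinarith
  have h4 : (c * ((j : ℝ) + 1)) ^ 2 ≤ (a + j) ^ 2 := by
    apply pow_le_pow_left₀ (by positivity) h1
  have h5 : 1 / (a + j) ^ 2 ≤ 1 / (c * ((j : ℝ) + 1)) ^ 2 :=
    one_div_le_one_div_of_le (by positivity) h4
  calc 1 / (a + j) ^ 2 ≤ 1 / (c * ((j : ℝ) + 1)) ^ 2 := h5
  _ = 1 / c ^ 2 * (1 / ((j : ℝ) + 1) ^ 2) := by rw [mul_pow, one_div, mul_inv, one_div, one_div]

lemma prod_summable {a : ℝ} (ha : 0 < a) :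
    Summable (fun j : ℕ => 1 / (((j : ℝ) + 1) * (a + j))) := by
  refine Summable.of_nonneg_of_le (fun j => by positivity) (fun j => ?_)
    ((sq_summable ha).mul_left (max a 1))
  have hM1 : (1:ℝ) ≤ max a 1 := le_max_right _ _
  have hMa : a ≤ max a 1 := le_max_left _ _
  have hj0 : (0:ℝ) ≤ (j:ℝ) := Nat.cast_nonneg j
  have key : a + (j:ℝ) ≤ max a 1 * ((j:ℝ)+1) := by nlinarith
  rw [mul_one_div, div_le_div_iff₀ (by positivity) (by positivity)]
  nlinarith [sq_nonneg ((j:ℝ)+1)]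

lemma dig_term_eq {x : ℝ} (hx : 0 < x) (j : ℕ) :
    1 / ((j : ℝ) + 1) - 1 / (x + j) = (x - 1) * (1 / (((j : ℝ) + 1) * (x + j))) := by
  have h1 : ((j : ℝ) + 1) ≠ 0 := by positivity
  have h2 : (x + (j : ℝ)) ≠ 0 := by positivity
  field_simp
  ring

lemma dig_summable {x : ℝ} (hx : 0 < x) :
    Summable (fun j : ℕ => 1 / ((j : ℝ) + 1) - 1 / (x + j)) :=
  (((prod_summable hx).mul_left (x - 1)).congr fun j => (dig_term_eq hx j).symm)


lemma hasDerivAt_fN (n : ℕ) {x : ℝ} (hx : 0 < x) : HasDerivAt (fN n) (fN' n x) x := by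
  have hsum : HasDerivAt (fun y : ℝ => ∑ j ∈ Finset.range (n+1), Real.log (y + j))
      (∑ j ∈ Finset.range (n+1), 1 / (x + j)) x := by
    refine HasDerivAt.fun_sum fun j _ => ?_
    have h := ((hasDerivAt_id x).add_const (j : ℝ)).log (by positivity)
    simpa [one_div] using h
  have h1 : HasDerivAt (fun y : ℝ => y * Real.log n + Real.log (Nat.factorial n : ℝ))
      (Real.log n) x := (hasDerivAt_mul_const _).add_const _
  exact h1.sub hsum

lemma hasDerivAt_fN' (n : ℕ) {x : ℝ} (hx : 0 < x) : HasDerivAt (fN' n) (fN'' n x) x := by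
  have hsum : HasDerivAt (fun y : ℝ => ∑ j ∈ Finset.range (n+1), 1 / (y + j))
      (∑ j ∈ Finset.range (n+1), -(1 / (x + j) ^ 2)) x := by
    refine HasDerivAt.fun_sum fun j _ => ?_
    have h := ((hasDerivAt_id x).add_const (j : ℝ)).inv (by positivity)
    simpa [one_div, neg_div, Pi.inv_def] using h
  have h := (hasDerivAt_const x (Real.log n)).sub hsum
  have h2 : HasDerivAt (fun y : ℝ => Real.log n - ∑ j ∈ Finset.range (n+1), 1 / (y + j))
      (fN'' n x) x := by
    simpa [fN'', Finset.sum_neg_distrib, Pi.sub_def] using h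
  exact h2.congr_of_eventuallyEq (Eventually.of_forall fun y => by rw [fN'])

lemma harmonic_cast (n : ℕ) :
    ((harmonic n : ℚ) : ℝ) = ∑ j ∈ Finset.range n, 1 / ((j : ℝ) + 1) := by
  rw [harmonic]
  push_cast
  simp [one_div]

lemma tendsto_part1 : Tendsto (fun n : ℕ => Real.log n - ((harmonic (n+1) : ℚ) : ℝ)) atTop
    (𝓝 (-Real.eulerMascheroniConstant)) := by
  have h1 : Tendsto (fun n : ℕ => -(Real.eulerMascheroniSeq' n) - 1 / ((n : ℝ) + 1)) atTop
      (𝓝 (-Real.eulerMascheroniConstant)) := by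
    have h2 := Real.tendsto_eulerMascheroniSeq'.neg
    have h3 : Tendsto (fun n : ℕ => 1 / ((n : ℝ) + 1)) atTop (𝓝 0) :=
      tendsto_one_div_add_atTop_nhds_zero_nat
    simpa using h2.sub h3
  refine h1.congr' ?_
  filter_upwards [eventually_ne_atTop 0] with n hn
  rw [Real.eulerMascheroniSeq', if_neg hn, harmonic_succ]
  push_cast
  ring

lemma fN'_split (n : ℕ) (x : ℝ) :
    fN' n x = (Real.log n - ((harmonic (n+1) : ℚ) : ℝ))
      + ∑ j ∈ Finset.range (n+1), (1 / ((j : ℝ) + 1) - 1 / (x + j)) := by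
  rw [fN', Finset.sum_sub_distrib, harmonic_cast]
  ring

lemma tendsto_fN' {x : ℝ} (hx : 0 < x) :
    Tendsto (fun n => fN' n x) atTop (𝓝 (dig x)) := by
  have h2 : Tendsto (fun n : ℕ => ∑ j ∈ Finset.range (n+1), (1 / ((j : ℝ) + 1) - 1 / (x + j)))
      atTop (𝓝 (∑' j : ℕ, (1 / ((j : ℝ) + 1) - 1 / (x + j)))) :=
    ((dig_summable hx).hasSum.tendsto_sum_nat).comp (tendsto_add_atTop_nat 1)
  have := tendsto_part1.add h2
  rw [dig]
  refine this.congr fun n => (fN'_split n x).symm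

lemma tendsto_fN {x : ℝ} (hx : 0 < x) :
    Tendsto (fun n => fN n x) atTop (𝓝 (Real.log (Real.Gamma x))) := by
  have h := (Real.GammaSeq_tendsto_Gamma x).log (Real.Gamma_pos_of_pos hx).ne'
  refine h.congr' ?_
  filter_upwards [eventually_ge_atTop 1] with n hn
  have hn0 : (0:ℝ) < n := by exact_mod_cast hn
  have hprod : ∀ j ∈ Finset.range (n+1), x + (j:ℝ) ≠ 0 := fun j _ => by positivity
  have hprodpos : (0:ℝ) < ∏ j ∈ Finset.range (n+1), (x + j) :=
    Finset.prod_pos fun j _ => by positivity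
  rw [Real.GammaSeq, Real.log_div (by positivity) hprodpos.ne',
    Real.log_mul (by positivity) (by positivity), Real.log_rpow hn0, Real.log_prod hprod, fN]


lemma tlu_fN'' : TendstoLocallyUniformlyOn (fun n x => fN'' n x) trig atTop (Ioi (0:ℝ)) := by
  rw [tendstoLocallyUniformlyOn_iff_forall_isCompact isOpen_Ioi]
  intro K hK hKc
  rcases K.eq_empty_or_nonempty with rfl | hne
  · exact tendstoUniformlyOn_empty
  obtain ⟨a, haK, ha⟩ := hKc.exists_isLeast hne
  have ha0 : (0:ℝ) < a := hK haK
  rw [Metric.tendstoUniformlyOn_iff]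
  intro ε hε
  have htail : Tendsto (fun n : ℕ => ∑' k : ℕ, 1 / (a + ((k + (n+1) : ℕ) : ℝ)) ^ 2) atTop
      (𝓝 0) :=
    (tendsto_sum_nat_add (f := fun j : ℕ => 1 / (a + j) ^ 2)).comp (tendsto_add_atTop_nat 1)
  filter_upwards [htail.eventually (gt_mem_nhds hε)] with n hn x hxK
  have hx0 : (0:ℝ) < x := hK hxK
  have hax : a ≤ x := ha hxK
  have hdiff : trig x - fN'' n x = ∑' k : ℕ, 1 / (x + ((k + (n+1) : ℕ) : ℝ)) ^ 2 := by
    have h := Summable.sum_add_tsum_nat_add (f := fun j : ℕ => 1 / (x + j) ^ 2) (n+1) (sq_summable hx0)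
    rw [trig, fN'', ← h]
    ring
  have htail_le : ∑' k : ℕ, 1 / (x + ((k + (n+1) : ℕ) : ℝ)) ^ 2
      ≤ ∑' k : ℕ, 1 / (a + ((k + (n+1) : ℕ) : ℝ)) ^ 2 := by
    refine Summable.tsum_le_tsum (fun k => one_div_le_one_div_of_le (by positivity)
        (by nlinarith [Nat.cast_nonneg (α := ℝ) (k + (n+1))]))
      ((_root_.summable_nat_add_iff (n+1)).2 (sq_summable hx0))
      ((_root_.summable_nat_add_iff (n+1)).2 (sq_summable ha0))
  have htail_nonneg : (0:ℝ) ≤ ∑' k : ℕ, 1 / (x + ((k + (n+1) : ℕ) : ℝ)) ^ 2 :=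
    tsum_nonneg fun k => by positivity
  rw [Real.dist_eq, hdiff, abs_of_nonneg htail_nonneg]
  exact lt_of_le_of_lt htail_le hn

lemma tlu_fN' : TendstoLocallyUniformlyOn (fun n x => fN' n x) dig atTop (Ioi (0:ℝ)) := by
  rw [tendstoLocallyUniformlyOn_iff_forall_isCompact isOpen_Ioi]
  intro K hK hKc
  rcases K.eq_empty_or_nonempty with rfl | hne
  · exact tendstoUniformlyOn_empty
  obtain ⟨a, haK, ha⟩ := hKc.exists_isLeast hne
  obtain ⟨b, hbK, hb⟩ := hKc.exists_isGreatest hne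
  have ha0 : (0:ℝ) < a := hK haK
  have hb0 : (0:ℝ) < b := hK hbK
  set H : ℕ → ℝ := fun j => (b+1) * (1 / (((j : ℝ) + 1) * (a + j))) with hH
  have hHsum : Summable H := (prod_summable ha0).mul_left (b+1)
  rw [Metric.tendstoUniformlyOn_iff]
  intro ε hε
  have htail : Tendsto (fun n : ℕ => ∑' j : ℕ, H (j + (n+1))) atTop (𝓝 0) :=
    (tendsto_sum_nat_add H).comp (tendsto_add_atTop_nat 1)
  have hP : Tendsto (fun n : ℕ => -Real.eulerMascheroniConstant
      - (Real.log n - ((harmonic (n+1) : ℚ) : ℝ))) atTop (𝓝 0) := by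
    simpa using (tendsto_const_nhds (x := -Real.eulerMascheroniConstant)).sub tendsto_part1
  have hP' : ∀ᶠ n : ℕ in atTop, |(-Real.eulerMascheroniConstant
      - (Real.log n - ((harmonic (n+1) : ℚ) : ℝ)))| < ε/2 := by
    have := hP.eventually (gt_mem_nhds (half_pos hε))
    filter_upwards [hP.eventually (Metric.ball_mem_nhds (0:ℝ) (half_pos hε))] with n hn
    simpa [Real.dist_eq] using hn
  filter_upwards [hP', htail.eventually (gt_mem_nhds (half_pos hε))] with n hn1 hn2 x hxK
  have hx0 : (0:ℝ) < x := hK hxK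
  have hax : a ≤ x := ha hxK
  have hxb : x ≤ b := hb hxK
  set t : ℕ → ℝ := fun j => 1 / ((j : ℝ) + 1) - 1 / (x + j) with ht
  have htsum : Summable t := dig_summable hx0
  have htshift : Summable (fun j => t (j + (n+1))) := (_root_.summable_nat_add_iff (n+1)).2 htsum
  have hHshift : Summable (fun j => H (j + (n+1))) := (_root_.summable_nat_add_iff (n+1)).2 hHsum
  have hbound : ∀ j : ℕ, |t j| ≤ H j := by
    intro j
    rw [ht]
    simp only
    rw [dig_term_eq hx0 j, abs_mul]
    have h1 : |x - 1| ≤ b + 1 := by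
      rw [abs_le]
      constructor <;> nlinarith
    have h2 : |1 / (((j : ℝ) + 1) * (x + j))| ≤ 1 / (((j : ℝ) + 1) * (a + j)) := by
      rw [abs_of_nonneg (by positivity)]
      refine one_div_le_one_div_of_le (by positivity) ?_
      have : (0:ℝ) ≤ (j:ℝ) := Nat.cast_nonneg j
      nlinarith
    calc |x - 1| * |1 / (((j : ℝ) + 1) * (x + j))| ≤ (b+1) * (1 / (((j : ℝ) + 1) * (a + j))) := by
          apply mul_le_mul h1 h2 (abs_nonneg _) (by positivity)
    _ = H j := rfl
  have hTbound : |∑' j : ℕ, t (j + (n+1))| ≤ ∑' j : ℕ, H (j + (n+1)) := by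
    calc |∑' j : ℕ, t (j + (n+1))| ≤ ∑' j : ℕ, |t (j + (n+1))| := by
          simpa using norm_tsum_le_tsum_norm (f := fun j => t (j + (n+1))) htshift.abs
    _ ≤ ∑' j : ℕ, H (j + (n+1)) := Summable.tsum_le_tsum (fun j => hbound _) htshift.abs hHshift
  have hdiff : dig x - fN' n x = (-Real.eulerMascheroniConstant
      - (Real.log n - ((harmonic (n+1) : ℚ) : ℝ))) + ∑' j : ℕ, t (j + (n+1)) := by
    rw [fN'_split, dig, ← Summable.sum_add_tsum_nat_add (f := t) (n+1) htsum]
    ring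
  rw [Real.dist_eq, hdiff]
  calc |_ + _| ≤ |(-Real.eulerMascheroniConstant
      - (Real.log n - ((harmonic (n+1) : ℚ) : ℝ)))| + |∑' j : ℕ, t (j + (n+1))| := abs_add_le _ _
  _ < ε/2 + ε/2 := by
      have := lt_of_le_of_lt hTbound hn2
      exact add_lt_add hn1 this
  _ = ε := add_halves ε


lemma hasDerivAt_dig {x : ℝ} (hx : 0 < x) : HasDerivAt dig (trig x) x :=
  hasDerivAt_of_tendstoLocallyUniformlyOn isOpen_Ioi tlu_fN''
    (Eventually.of_forall fun n y hy => hasDerivAt_fN' n hy) (fun y hy => tendsto_fN' hy) hx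

lemma hasDerivAt_logGamma {x : ℝ} (hx : 0 < x) :
    HasDerivAt (fun y => Real.log (Real.Gamma y)) (dig x) x :=
  hasDerivAt_of_tendstoLocallyUniformlyOn isOpen_Ioi tlu_fN'
    (Eventually.of_forall fun n y hy => hasDerivAt_fN n hy) (fun y hy => tendsto_fN hy) hx

lemma hasDerivAt_Gamma' {x : ℝ} (hx : 0 < x) : HasDerivAt Real.Gamma (J 1 x) x := by
  refine (hasDerivAt_J 0 hx).congr_of_eventuallyEq ?_
  filter_upwards [Ioi_mem_nhds hx] with y hy
  exact (J_zero_eq_Gamma hy).symm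

lemma dig_eq {x : ℝ} (hx : 0 < x) : dig x = J 1 x / Real.Gamma x := by
  have h1 := (hasDerivAt_Gamma' hx).log (Real.Gamma_pos_of_pos hx).ne'
  exact (hasDerivAt_logGamma hx).unique h1

lemma key_identity {m : ℝ} (hm : 0 < m) :
    (J 2 m * Real.Gamma m - J 1 m * J 1 m) / (Real.Gamma m) ^ 2 = trig m := by
  have hdiv : HasDerivAt (fun y => J 1 y / J 0 y)
      ((J 2 m * J 0 m - J 1 m * J 1 m) / (J 0 m) ^ 2) m :=
    (hasDerivAt_J 1 hm).div (hasDerivAt_J 0 hm)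
      (by rw [J_zero_eq_Gamma hm]; exact (Real.Gamma_pos_of_pos hm).ne')
  have heq : (fun y => J 1 y / J 0 y) =ᶠ[𝓝 m] dig := by
    filter_upwards [Ioi_mem_nhds hm] with y hy
    rw [dig_eq hy, J_zero_eq_Gamma hy]
  have h2 : HasDerivAt dig ((J 2 m * J 0 m - J 1 m * J 1 m) / (J 0 m) ^ 2) m :=
    hdiv.congr_of_eventuallyEq heq.symm
  have h3 := h2.unique (hasDerivAt_dig hm)
  rw [J_zero_eq_Gamma hm] at h3
  exact h3

lemma density_meas (m r : ℝ) : Measurable fun x : ℝ =>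
    (r ^ m * x ^ (m - 1) * Real.exp (-r * x) / Real.Gamma m).toNNReal := by
  apply Measurable.real_toNNReal
  apply Measurable.div_const
  have h1 : Measurable fun x : ℝ => x ^ (m - 1) := by measurability
  have h2 : Measurable fun x : ℝ => Real.exp (-r * x) :=
    (measurable_id.const_mul (-r)).exp
  exact (h1.const_mul (r ^ m)).mul h2

lemma integral_gammaDist {m r : ℝ} (hm : 0 < m) (hr : 0 < r) (f : ℝ → ℝ) :
    ∫ x, f x ∂(gammaDist m r)
      = ∫ x in Ioi (0:ℝ), (r ^ m * x ^ (m - 1) * Real.exp (-r * x) / Real.Gamma m) * f x := by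
  rw [gammaDist]
  have hED : (fun x : ℝ => ENNReal.ofReal (r ^ m * x ^ (m - 1) * Real.exp (-r * x) / Real.Gamma m))
      = (fun x : ℝ =>
        ((r ^ m * x ^ (m - 1) * Real.exp (-r * x) / Real.Gamma m).toNNReal : ℝ≥0∞)) := rfl
  rw [hED, integral_withDensity_eq_integral_smul (density_meas m r) f]
  refine setIntegral_congr_fun measurableSet_Ioi fun x hx => ?_
  have hx0 : (0:ℝ) < x := hx
  have hΓ : (0:ℝ) < Real.Gamma m := Real.Gamma_pos_of_pos hm
  have hpos : 0 ≤ r ^ m * x ^ (m - 1) * Real.exp (-r * x) / Real.Gamma m := by positivity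
  rw [NNReal.smul_def, Real.coe_toNNReal _ hpos, smul_eq_mul]

lemma moment_eq {m r : ℝ} (hm : 0 < m) (hr : 0 < r) (n : ℕ) :
    ∫ x, (Real.log x) ^ n ∂(gammaDist m r)
      = (∫ t in Ioi (0:ℝ), t ^ (m-1) * Real.exp (-t) * (Real.log t - Real.log r) ^ n)
        / Real.Gamma m := by
  rw [integral_gammaDist hm hr]
  have step1 : ∀ x ∈ Ioi (0:ℝ),
      (r ^ m * x ^ (m - 1) * Real.exp (-r * x) / Real.Gamma m) * (Real.log x) ^ n
        = (r / Real.Gamma m) * ((fun t : ℝ =>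
            t ^ (m-1) * Real.exp (-t) * (Real.log t - Real.log r) ^ n) (r * x)) := by
    intro x hx
    have hx0 : (0:ℝ) < x := hx
    simp only
    rw [Real.mul_rpow hr.le hx0.le, Real.log_mul hr.ne' hx0.ne',
      show Real.log r + Real.log x - Real.log r = Real.log x by ring,
      show r ^ m = r * r ^ (m - 1) by
        rw [show m = 1 + (m - 1) by ring, Real.rpow_add hr, Real.rpow_one]; ring_nf,
      neg_mul]
    ring
  have hcomp := integral_comp_mul_left_Ioi
      (fun t : ℝ => t ^ (m-1) * Real.exp (-t) * (Real.log t - Real.log r) ^ n) 0 hr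
  rw [mul_zero] at hcomp
  rw [setIntegral_congr_fun measurableSet_Ioi step1, integral_const_mul, hcomp, smul_eq_mul]
  field_simp

lemma int_expand1 {m : ℝ} (hm : 0 < m) (L : ℝ) :
    (∫ t in Ioi (0:ℝ), t ^ (m-1) * Real.exp (-t) * (Real.log t - L) ^ 1)
      = J 1 m - L * J 0 m := by
  have heq : (fun t : ℝ => t ^ (m-1) * Real.exp (-t) * (Real.log t - L) ^ 1)
      = fun t => t ^ (m-1) * g 1 t - L * (t ^ (m-1) * g 0 t) := by
    funext t; simp only [g, pow_one, pow_zero, one_mul]; ring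
  rw [heq]
  have h1 : IntegrableOn (fun t : ℝ => t ^ (m-1) * g 1 t) (Ioi (0:ℝ)) := J_integrable 1 hm
  have h0 : IntegrableOn (fun t : ℝ => L * (t ^ (m-1) * g 0 t)) (Ioi (0:ℝ)) :=
    (J_integrable 0 hm).const_mul L
  rw [integral_sub h1 h0, integral_const_mul, J, J]

lemma int_expand2 {m : ℝ} (hm : 0 < m) (L : ℝ) :
    (∫ t in Ioi (0:ℝ), t ^ (m-1) * Real.exp (-t) * (Real.log t - L) ^ 2)
      = J 2 m - 2 * L * J 1 m + L ^ 2 * J 0 m := by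
  have heq : (fun t : ℝ => t ^ (m-1) * Real.exp (-t) * (Real.log t - L) ^ 2)
      = fun t => (t ^ (m-1) * g 2 t - 2 * L * (t ^ (m-1) * g 1 t))
          + L ^ 2 * (t ^ (m-1) * g 0 t) := by
    funext t; simp only [g, pow_zero, one_mul]; ring
  rw [heq]
  have h2 : IntegrableOn (fun t : ℝ => t ^ (m-1) * g 2 t) (Ioi (0:ℝ)) := J_integrable 2 hm
  have h1 : IntegrableOn (fun t : ℝ => 2 * L * (t ^ (m-1) * g 1 t)) (Ioi (0:ℝ)) :=
    (J_integrable 1 hm).const_mul _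
  have h0 : IntegrableOn (fun t : ℝ => L ^ 2 * (t ^ (m-1) * g 0 t)) (Ioi (0:ℝ)) :=
    (J_integrable 0 hm).const_mul _
  have h21 : IntegrableOn (fun t : ℝ => t ^ (m-1) * g 2 t - 2 * L * (t ^ (m-1) * g 1 t))
      (Ioi (0:ℝ)) := h2.sub h1
  rw [integral_add h21 h0, integral_sub h2 h1, integral_const_mul, integral_const_mul, J, J, J]

end GVL

/-- **Variance of the logarithm of a Gamma random variable**: for shape `m > 0` and rate `r > 0`,
the variance of `ln` under the Gamma distribution equals the Hurwitz zeta value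
`ζ(2, m) = ∑_{k≥0} 1/(m+k)²`, independently of the rate. -/
theorem gamma_variance_log (m r : ℝ) (hm : 0 < m) (hr : 0 < r) :
    (∫ x, (Real.log x) ^ 2 ∂(gammaDist m r)) - (∫ x, Real.log x ∂(gammaDist m r)) ^ 2
      = ∑' k : ℕ, 1 / (m + k) ^ 2 := by
  have hΓ : (0:ℝ) < Real.Gamma m := Real.Gamma_pos_of_pos hm
  have h1 : ∫ x, Real.log x ∂(gammaDist m r)
      = (GVL.J 1 m - Real.log r * GVL.J 0 m) / Real.Gamma m := by
    have h := GVL.moment_eq hm hr 1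
    rw [GVL.int_expand1 hm] at h
    simpa [pow_one] using h
  have h2 : ∫ x, (Real.log x) ^ 2 ∂(gammaDist m r)
      = (GVL.J 2 m - 2 * Real.log r * GVL.J 1 m + (Real.log r) ^ 2 * GVL.J 0 m)
        / Real.Gamma m := by
    have h := GVL.moment_eq hm hr 2
    rw [GVL.int_expand2 hm] at h
    exact h
  have hkey := GVL.key_identity hm
  have hJ0 : GVL.J 0 m = Real.Gamma m := GVL.J_zero_eq_Gamma hm
  have htrig : GVL.trig m = ∑' k : ℕ, 1 / (m + k) ^ 2 := rfl
  rw [h1, h2, hJ0, ← htrig, ← hkey]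
  field_simp
  ring
end
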